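/- Define x̄(x) = u'(x) + √(1+u'(x)²), ū(x) = (u(x) − x·u'(x))·x̄(x) along a smooth u with u'' ≠ 0. If ū as a function of x̄ satisfies d³ū/dx̄³ = 0, then u satisfies u''' = 3u'(u'')²/(1+(u')²). -/

import Mathlib

/-!
Along the curve, `dx̄/dx = u'' x̄ / √(1 + u'²)` never vanishes, so each `x̄`-derivative of `ū` is
the `x`-derivative of the previous one divided by `dx̄/dx`. Starting from `ū = (u - x u') x̄` this
gives `ū' = u - x x̄`, then `ū'' = -x - (1 + u'²) / (u'' x̄)`, and finally
`ū''' = √(1 + u'²) ((1 + u'²) u''' - 3 u' u''²) / (u''³ x̄²)`, whose vanishing is the claimed ODE.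
-/

open Filter Topology

theorem ContDiffOn.hasDerivAt_iteratedDeriv {𝕜 F : Type*} [NontriviallyNormedField 𝕜]
    [NormedAddCommGroup F] [NormedSpace 𝕜 F] {f : 𝕜 → F} {s : Set 𝕜} {n : WithTop ℕ∞} {m : ℕ}
    {x : 𝕜} (h : ContDiffOn 𝕜 n f s) (hs : IsOpen s) (hmn : m < n) (hx : x ∈ s) :
    HasDerivAt (iteratedDeriv m f) (iteratedDeriv (m + 1) f x) x := by
  rw [iteratedDeriv_succ]
  refine DifferentiableAt.hasDerivAt ?_
  have hwithin := (h.differentiableOn_iteratedDerivWithin hmn hs.uniqueDiffOn x hx).differentiableAt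
    (hs.mem_nhds hx)
  exact hwithin.congr_of_eventuallyEq
    (eventuallyEq_of_mem (hs.mem_nhds hx) (iteratedDerivWithin_of_isOpen hs)).symm

theorem deriv_eq_div_of_comp_eventuallyEq {𝕜 : Type*} [NontriviallyNormedField 𝕜]
    {f X g : 𝕜 → 𝕜} {x X' g' : 𝕜} (hf : DifferentiableAt 𝕜 f (X x)) (hX : HasDerivAt X X' x)
    (hg : HasDerivAt g g' x) (hX' : X' ≠ 0) (h : f ∘ X =ᶠ[𝓝 x] g) :
    deriv f (X x) = g' / X' :=
  eq_div_of_mul_eq hX' ((hf.hasDerivAt.comp x hX).unique (hg.congr_of_eventuallyEq h))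

/-- The new independent variable `x̄ = u' + √(1 + u'²)` of the contact transformation, as a function
of `t = u'`. -/
noncomputable def contactVar (t : ℝ) : ℝ := t + √(1 + t ^ 2)

lemma sqrt_one_add_sq_pos (t : ℝ) : 0 < √(1 + t ^ 2) := Real.sqrt_pos.2 (by positivity)

lemma contactVar_pos (t : ℝ) : 0 < contactVar t := by
  have : |t| < √(1 + t ^ 2) := by
    rw [← Real.sqrt_sq_eq_abs]
    exact Real.sqrt_lt_sqrt (sq_nonneg t) (lt_one_add _)
  unfold contactVar
  linarith [neg_abs_le t]

lemma hasDerivAt_contactVar (t : ℝ) :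
    HasDerivAt contactVar (contactVar t / √(1 + t ^ 2)) t := by
  have hs := sqrt_one_add_sq_pos t
  have hsqrt := ((hasDerivAt_pow 2 t).const_add 1).sqrt (by positivity : 1 + t ^ 2 ≠ 0)
  refine ((hasDerivAt_id' t).add hsqrt).congr_deriv ?_
  simp only [contactVar]
  field_simp
  ring

section ContactTransformation

variable {I : Set ℝ} {u v : ℝ → ℝ}

lemma hasDerivAt_contactVar_deriv (hI : IsOpen I) (hu : ContDiffOn ℝ (⊤ : ℕ∞) u I) {x : ℝ}
    (hx : x ∈ I) :
    HasDerivAt (fun y ↦ contactVar (deriv u y))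
      (iteratedDeriv 2 u x * contactVar (deriv u x) / √(1 + deriv u x ^ 2)) x := by
  have hp := hu.hasDerivAt_iteratedDeriv hI (m := 1)
    (WithTop.coe_lt_coe.2 <| ENat.natCast_lt_top 1) hx
  rw [iteratedDeriv_one] at hp
  exact ((hasDerivAt_contactVar _).comp x hp).congr_deriv (by ring)

lemma iteratedDeriv_succ_comp_contactVar (hI : IsOpen I) (hu : ContDiffOn ℝ (⊤ : ℕ∞) u I)
    (hq : ∀ x ∈ I, iteratedDeriv 2 u x ≠ 0) (hv : ContDiff ℝ (⊤ : ℕ∞) v) {n : ℕ} {g : ℝ → ℝ}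
    {g' x : ℝ} (hx : x ∈ I) (hg : HasDerivAt g g' x)
    (h : ∀ y ∈ I, iteratedDeriv n v (contactVar (deriv u y)) = g y) :
    iteratedDeriv (n + 1) v (contactVar (deriv u x)) =
      g' / (iteratedDeriv 2 u x * contactVar (deriv u x) / √(1 + deriv u x ^ 2)) := by
  rw [iteratedDeriv_succ]
  refine deriv_eq_div_of_comp_eventuallyEq (X := fun y ↦ contactVar (deriv u y))
    ((hv.differentiable_iteratedDeriv n (WithTop.coe_lt_coe.2 <| ENat.natCast_lt_top n)) _)
    (hasDerivAt_contactVar_deriv hI hu hx) hg ?_ (eventuallyEq_of_mem (hI.mem_nhds hx) h)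
  have := sqrt_one_add_sq_pos (deriv u x)
  have := contactVar_pos (deriv u x)
  exact div_ne_zero (mul_ne_zero (hq x hx) (by positivity)) (by positivity)

lemma iteratedDeriv_one_comp_contactVar (hI : IsOpen I) (hu : ContDiffOn ℝ (⊤ : ℕ∞) u I)
    (hq : ∀ x ∈ I, iteratedDeriv 2 u x ≠ 0) (hv : ContDiff ℝ (⊤ : ℕ∞) v)
    (hcomp : ∀ x ∈ I, v (contactVar (deriv u x)) = (u x - x * deriv u x) * contactVar (deriv u x))
    {x : ℝ} (hx : x ∈ I) :
    iteratedDeriv 1 v (contactVar (deriv u x)) = u x - x * contactVar (deriv u x) := by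
  have hu' : HasDerivAt u (deriv u x) x := by
    simpa using hu.hasDerivAt_iteratedDeriv hI (m := 0) 
      (WithTop.coe_lt_coe.2 <| ENat.natCast_lt_top 0) hx
  have hp := hu.hasDerivAt_iteratedDeriv hI (m := 1)
    (WithTop.coe_lt_coe.2 <| ENat.natCast_lt_top 1) hx
  rw [iteratedDeriv_one] at hp
  rw [iteratedDeriv_succ_comp_contactVar hI hu hq hv hx
    (((hu'.sub ((hasDerivAt_id' x).mul hp)).mul (hasDerivAt_contactVar_deriv hI hu hx)))
    (by simpa using hcomp)]
  have := sqrt_one_add_sq_pos (deriv u x)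
  have := contactVar_pos (deriv u x)
  have := hq x hx
  field_simp
  simp only [contactVar, Pi.sub_apply, Pi.mul_apply]
  ring

lemma iteratedDeriv_two_comp_contactVar (hI : IsOpen I) (hu : ContDiffOn ℝ (⊤ : ℕ∞) u I)
    (hq : ∀ x ∈ I, iteratedDeriv 2 u x ≠ 0) (hv : ContDiff ℝ (⊤ : ℕ∞) v)
    (hcomp : ∀ x ∈ I, v (contactVar (deriv u x)) = (u x - x * deriv u x) * contactVar (deriv u x))
    {x : ℝ} (hx : x ∈ I) :
    iteratedDeriv 2 v (contactVar (deriv u x)) =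
      -(x + (1 + deriv u x ^ 2) / (iteratedDeriv 2 u x * contactVar (deriv u x))) := by
  have hu' : HasDerivAt u (deriv u x) x := by
    simpa using hu.hasDerivAt_iteratedDeriv hI (m := 0) 
      (WithTop.coe_lt_coe.2 <| ENat.natCast_lt_top 0) hx
  rw [iteratedDeriv_succ_comp_contactVar hI hu hq hv hx
    (hu'.sub ((hasDerivAt_id' x).mul (hasDerivAt_contactVar_deriv hI hu hx)))
    (fun y hy ↦ iteratedDeriv_one_comp_contactVar hI hu hq hv hcomp hy)]
  have hs := sqrt_one_add_sq_pos (deriv u x)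
  have hs2 := Real.sq_sqrt (by positivity : 0 ≤ 1 + deriv u x ^ 2)
  have := contactVar_pos (deriv u x)
  have := hq x hx
  field_simp
  simp only [contactVar]
  linear_combination -hs2

lemma iteratedDeriv_three_comp_contactVar (hI : IsOpen I) (hu : ContDiffOn ℝ (⊤ : ℕ∞) u I)
    (hq : ∀ x ∈ I, iteratedDeriv 2 u x ≠ 0) (hv : ContDiff ℝ (⊤ : ℕ∞) v)
    (hcomp : ∀ x ∈ I, v (contactVar (deriv u x)) = (u x - x * deriv u x) * contactVar (deriv u x))
    {x : ℝ} (hx : x ∈ I) :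
    iteratedDeriv 3 v (contactVar (deriv u x)) =
      √(1 + deriv u x ^ 2) *
          ((1 + deriv u x ^ 2) * iteratedDeriv 3 u x - 3 * deriv u x * iteratedDeriv 2 u x ^ 2) /
        (iteratedDeriv 2 u x ^ 3 * contactVar (deriv u x) ^ 2) := by
  have hp := hu.hasDerivAt_iteratedDeriv hI (m := 1)
    (WithTop.coe_lt_coe.2 <| ENat.natCast_lt_top 1) hx
  have hq' := hu.hasDerivAt_iteratedDeriv hI (m := 2)
    (WithTop.coe_lt_coe.2 <| ENat.natCast_lt_top 2) hx
  simp only [Nat.reduceAdd, iteratedDeriv_one] at hp hq'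
  have hs := sqrt_one_add_sq_pos (deriv u x)
  have hs2 := Real.sq_sqrt (by positivity : 0 ≤ 1 + deriv u x ^ 2)
  have := contactVar_pos (deriv u x)
  have := hq x hx
  rw [iteratedDeriv_succ_comp_contactVar hI hu hq hv hx
    ((hasDerivAt_id' x).add (((hp.pow 2).const_add 1).div
      (hq'.mul (hasDerivAt_contactVar_deriv hI hu hx))
      (mul_ne_zero (hq x hx) (contactVar_pos _).ne'))).neg
    (fun y hy ↦ iteratedDeriv_two_comp_contactVar hI hu hq hv hcomp hy)]
  simp only [Pi.mul_apply, Pi.pow_apply]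
  field_simp
  simp only [contactVar]
  linear_combination -iteratedDeriv 2 u x ^ 2 * hs2

end ContactTransformation

theorem stmt_15_general (I : Set ℝ) (hI : IsOpen I)
    (u : ℝ → ℝ) (hu : ContDiffOn ℝ (⊤ : ℕ∞) u I)
    (hq : ∀ x ∈ I, iteratedDeriv 2 u x ≠ 0)
    (v : ℝ → ℝ) (hv : ContDiff ℝ (⊤ : ℕ∞) v)
    (hcomp : ∀ x ∈ I,
      v (deriv u x + Real.sqrt (1 + (deriv u x) ^ 2)) =
        (u x - x * deriv u x) * (deriv u x + Real.sqrt (1 + (deriv u x) ^ 2)))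
    (h3 : ∀ x ∈ I, iteratedDeriv 3 v (deriv u x + Real.sqrt (1 + (deriv u x) ^ 2)) = 0) :
    ∀ x ∈ I, iteratedDeriv 3 u x =
      3 * deriv u x * (iteratedDeriv 2 u x) ^ 2 / (1 + (deriv u x) ^ 2) := by
  intro x hx
  have hzero : √(1 + deriv u x ^ 2) *
      ((1 + deriv u x ^ 2) * iteratedDeriv 3 u x - 3 * deriv u x * iteratedDeriv 2 u x ^ 2) /
        (iteratedDeriv 2 u x ^ 3 * contactVar (deriv u x) ^ 2) = 0 :=
    (iteratedDeriv_three_comp_contactVar hI hu hq hv hcomp hx).symm.trans (h3 x hx)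
  have hden : iteratedDeriv 2 u x ^ 3 * contactVar (deriv u x) ^ 2 ≠ 0 :=
    mul_ne_zero (pow_ne_zero _ (hq x hx)) (pow_ne_zero _ (contactVar_pos _).ne')
  have hnum := ((mul_eq_zero.1 ((div_eq_zero_iff.1 hzero).resolve_right hden)).resolve_left
    (sqrt_one_add_sq_pos _).ne')
  rw [eq_div_iff (by positivity)]
  linarith

theorem stmt_15 (I : Set ℝ) (hI : IsOpen I) (hI' : I.OrdConnected)
    (u : ℝ → ℝ) (hu : ContDiffOn ℝ (⊤ : ℕ∞) u I)
    (hq : ∀ x ∈ I, iteratedDeriv 2 u x ≠ 0)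
    (v : ℝ → ℝ) (hv : ContDiff ℝ (⊤ : ℕ∞) v)
    (hcomp : ∀ x ∈ I,
      v (deriv u x + Real.sqrt (1 + (deriv u x) ^ 2)) =
        (u x - x * deriv u x) * (deriv u x + Real.sqrt (1 + (deriv u x) ^ 2)))
    (h3 : ∀ x ∈ I, iteratedDeriv 3 v (deriv u x + Real.sqrt (1 + (deriv u x) ^ 2)) = 0) :
    ∀ x ∈ I, iteratedDeriv 3 u x =
      3 * deriv u x * (iteratedDeriv 2 u x) ^ 2 / (1 + (deriv u x) ^ 2) :=
  stmt_15_general I hI u hu hq v hv hcomp h3
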